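/- Sharpness is bounded by statistical information: SHARP_F(g) := E[D_F(E[Y|g(X)], E[Y])] ≤ E[F(E[Y|X])] − F(E[Y]) for every measurable classifier g : 𝒳 → Δ^k. -/

import Mathlib

/-!
Because `E[Y | g(X)]` has mean `E[Y]`, the linear part of the Bregman divergence integrates to
zero, so the sharpness equals `E[F(E[Y | g(X)])] - F(E[Y])`. Since `σ(g ∘ X) ≤ σ(X)`, the tower
property writes `E[Y | g(X)] = E[E[Y | X] | g(X)]`, and conditional Jensen gives
`F(E[Y | g(X)]) ≤ E[F(E[Y | X]) | g(X)]`; integrating yields the bound. One-hot labels keep all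
conditional expectations in the compact simplex, which makes everything integrable.
-/

open MeasureTheory ProbabilityTheory
open scoped RealInnerProductSpace

/-- Bregman divergence generated by `F`. -/
noncomputable def breg {k : ℕ} (F : EuclideanSpace ℝ (Fin k) → ℝ)
    (p q : EuclideanSpace ℝ (Fin k)) : ℝ :=
  F p - F q - ⟪gradient F q, p - q⟫

/-- The probability simplex in `ℝ^k`. -/
def simplexE (k : ℕ) : Set (EuclideanSpace ℝ (Fin k)) :=
  {p | (∀ i, 0 ≤ p i) ∧ ∑ i, p i = 1}

lemma isCompact_simplexE (k : ℕ) : IsCompact (simplexE k) :=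
  (PiLp.homeomorph 2 _).isCompact_preimage.2 (isCompact_stdSimplex ℝ (Fin k))

lemma convex_simplexE (k : ℕ) : Convex ℝ (simplexE k) :=
  (convex_stdSimplex ℝ (Fin k)).linear_preimage (WithLp.linearEquiv 2 ℝ _).toLinearMap

lemma single_mem_simplexE {k : ℕ} (i : Fin k) : EuclideanSpace.single i (1 : ℝ) ∈ simplexE k :=
  single_mem_stdSimplex ℝ i

lemma MeasureTheory.Integrable.of_ae_mem_of_isBounded {Ω E : Type*} [MeasurableSpace Ω]
    {μ : Measure Ω} [IsFiniteMeasure μ] [NormedAddCommGroup E] {f : Ω → E} {K : Set E}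
    (hK : Bornology.IsBounded K) (hf : AEStronglyMeasurable f μ) (hfK : ∀ᵐ ω ∂μ, f ω ∈ K) :
    Integrable f μ := by
  obtain ⟨C, hC⟩ := hK.exists_norm_le
  exact .of_bound hf C (hfK.mono fun ω hω => hC _ hω)

section ConditionalJensen

variable {Ω E : Type*} {m m₁ m₂ m₀ : MeasurableSpace Ω} {μ : Measure[m₀] Ω}
  [NormedAddCommGroup E] [NormedSpace ℝ E] [CompleteSpace E] {f : Ω → E}

lemma integrable_comp_condExp_of_ae_mem [IsFiniteMeasure μ] (hm : m ≤ m₀) {K : Set E}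
    (hK : IsCompact K) (hKc : Convex ℝ K) {φ : E → ℝ} (hφ : Continuous φ)
    (hf : Integrable f μ) (hfK : ∀ᵐ ω ∂μ, f ω ∈ K) :
    Integrable (φ ∘ μ[f | m]) μ := by
  refine .of_ae_mem_of_isBounded (hK.image hφ).isBounded
    (hφ.comp_aestronglyMeasurable (stronglyMeasurable_condExp.mono hm).aestronglyMeasurable) ?_
  filter_upwards [hKc.condExp_mem hm hf hK.isClosed hfK] with ω hω
  exact Set.mem_image_of_mem φ hω

theorem ConvexOn.integral_comp_condExp_mono [IsFiniteMeasure μ] [FiniteDimensional ℝ E]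
    {φ : E → ℝ} (hφ : ConvexOn ℝ Set.univ φ) (hm₁₂ : m₁ ≤ m₂) (hm₂ : m₂ ≤ m₀)
    (hφ₁ : Integrable (φ ∘ μ[f | m₁]) μ) (hφ₂ : Integrable (φ ∘ μ[f | m₂]) μ) :
    ∫ ω, φ (μ[f | m₁] ω) ∂μ ≤ ∫ ω, φ (μ[f | m₂] ω) ∂μ := by
  have hjensen : φ ∘ μ[f | m₁] ≤ᵐ[μ] μ[φ ∘ μ[f | m₂] | m₁] := by
    have h := hφ.map_condExp_le_of_finiteDimensional (hm₁₂.trans hm₂)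
      (f := μ[f | m₂]) integrable_condExp hφ₂
    filter_upwards [h, condExp_condExp_of_le (μ := μ) (f := f) hm₁₂ hm₂] with ω hω htower
    simpa only [Function.comp_apply, htower] using hω
  calc ∫ ω, φ (μ[f | m₁] ω) ∂μ ≤ ∫ ω, μ[φ ∘ μ[f | m₂] | m₁] ω ∂μ :=
        integral_mono_ae hφ₁ integrable_condExp hjensen
    _ = ∫ ω, φ (μ[f | m₂] ω) ∂μ := integral_condExp (hm₁₂.trans hm₂)

end ConditionalJensen

lemma integral_breg_integral {Ω : Type*} [MeasurableSpace Ω] {μ : Measure Ω}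
    [IsProbabilityMeasure μ] {k : ℕ} {F : EuclideanSpace ℝ (Fin k) → ℝ}
    {Z : Ω → EuclideanSpace ℝ (Fin k)} (hZ : Integrable Z μ)
    (hFZ : Integrable (fun ω => F (Z ω)) μ) :
    ∫ ω, breg F (Z ω) (∫ ω', Z ω' ∂μ) ∂μ = ∫ ω, F (Z ω) ∂μ - F (∫ ω', Z ω' ∂μ) := by
  set z := ∫ ω', Z ω' ∂μ
  have hcentered : ∫ ω, Z ω - z ∂μ = 0 := by
    rw [integral_sub hZ (integrable_const z), integral_const, probReal_univ, one_smul, sub_self]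
  have hinner : Integrable (fun ω => ⟪gradient F z, Z ω - z⟫) μ :=
    (hZ.sub (integrable_const z)).const_inner _
  calc ∫ ω, breg F (Z ω) z ∂μ
      = ∫ ω, F (Z ω) - F z ∂μ - ∫ ω, ⟪gradient F z, Z ω - z⟫ ∂μ :=
        integral_sub (hFZ.sub (integrable_const _)) hinner
    _ = ∫ ω, F (Z ω) ∂μ - F z := by
        rw [integral_inner (f := fun ω => Z ω - z) (hZ.sub (integrable_const z)), hcentered,
          inner_zero_right, sub_zero, integral_sub hFZ (integrable_const _), integral_const,
          probReal_univ, one_smul]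

lemma integral_breg_condExp_le_of_le {Ω : Type*} {m₁ m₂ m₀ : MeasurableSpace Ω}
    {μ : Measure Ω} [IsProbabilityMeasure μ] {k : ℕ} {Y : Ω → EuclideanSpace ℝ (Fin k)}
    {F : EuclideanSpace ℝ (Fin k) → ℝ} {K : Set (EuclideanSpace ℝ (Fin k))} (hK : IsCompact K)
    (hKc : Convex ℝ K) (hm₁₂ : m₁ ≤ m₂) (hm₂ : m₂ ≤ m₀) (hY : AEStronglyMeasurable Y μ)
    (hYK : ∀ᵐ ω ∂μ, Y ω ∈ K) (hF : ConvexOn ℝ Set.univ F) :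
    ∫ ω, breg F (μ[Y | m₁] ω) (∫ ω', Y ω' ∂μ) ∂μ
      ≤ ∫ ω, F (μ[Y | m₂] ω) ∂μ - F (∫ ω', Y ω' ∂μ) := by
  have hm₁ := hm₁₂.trans hm₂
  have hYint : Integrable Y μ := .of_ae_mem_of_isBounded hK.isBounded hY hYK
  have hFint : ∀ {m}, m ≤ m₀ → Integrable (F ∘ μ[Y | m]) μ := fun hm =>
    integrable_comp_condExp_of_ae_mem hm hK hKc
      (continuousOn_univ.1 (hF.continuousOn isOpen_univ)) hYint hYK
  rw [← integral_condExp hm₁ (f := Y), integral_breg_integral integrable_condExp (hFint hm₁),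
    integral_condExp hm₁]
  exact sub_le_sub_right (hF.integral_comp_condExp_mono hm₁₂ hm₂ (hFint hm₁) (hFint hm₂)) _

theorem sharpness_le_statistical_information_general
    {Ω 𝒳 : Type*} [MeasurableSpace Ω] [MeasurableSpace 𝒳]
    (μ : Measure Ω) [IsProbabilityMeasure μ] {k : ℕ}
    (X : Ω → 𝒳) (Y : Ω → EuclideanSpace ℝ (Fin k))
    (g : 𝒳 → EuclideanSpace ℝ (Fin k))
    (F : EuclideanSpace ℝ (Fin k) → ℝ)
    (hX : Measurable X) (hY : Measurable Y) (hg : Measurable g)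
    (hYoh : ∀ ω, ∃ i, Y ω = EuclideanSpace.single i 1)
    (hF : ConvexOn ℝ Set.univ F) :
    ∫ ω, breg F
        ((μ[Y | MeasurableSpace.comap (fun ω' => g (X ω')) inferInstance]) ω)
        (∫ ω', Y ω' ∂μ) ∂μ
      ≤ (∫ ω, F ((μ[Y | MeasurableSpace.comap X inferInstance]) ω) ∂μ)
        - F (∫ ω', Y ω' ∂μ) := by
  have hYs : ∀ ω, Y ω ∈ simplexE k := fun ω => by
    obtain ⟨i, hi⟩ := hYoh ω
    exact hi ▸ single_mem_simplexE i
  exact integral_breg_condExp_le_of_le (isCompact_simplexE k) (convex_simplexE k)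
    (hg.comp (comap_measurable X)).comap_le hX.comap_le hY.aestronglyMeasurable
    (ae_of_all μ hYs) hF

/-- sharpness is bounded by statistical information:
`SHARP_F(g) = E[D_F(E[Y|g(X)], E[Y])] ≤ E[F(E[Y|X])] − F(E[Y])`. -/
theorem sharpness_le_statistical_information
    {Ω 𝒳 : Type*} [MeasurableSpace Ω] [MeasurableSpace 𝒳]
    (μ : Measure Ω) [IsProbabilityMeasure μ] {k : ℕ}
    (X : Ω → 𝒳) (Y : Ω → EuclideanSpace ℝ (Fin k))
    (g : 𝒳 → EuclideanSpace ℝ (Fin k))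
    (F : EuclideanSpace ℝ (Fin k) → ℝ)
    (hX : Measurable X) (hY : Measurable Y) (hg : Measurable g)
    (hYoh : ∀ ω, ∃ i, Y ω = EuclideanSpace.single i 1)
    (hgs : ∀ x, g x ∈ simplexE k)
    (U : Set (EuclideanSpace ℝ (Fin k))) (hU : IsOpen U) (hUs : simplexE k ⊆ U)
    (hF : ConvexOn ℝ Set.univ F)
    (hFd : ∀ p ∈ U, DifferentiableAt ℝ F p)
    (hFc : ContinuousOn F (simplexE k))
    (hgFc : ContinuousOn (gradient F) (simplexE k)) :
    ∫ ω, breg F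
        ((μ[Y | MeasurableSpace.comap (fun ω' => g (X ω')) inferInstance]) ω)
        (∫ ω', Y ω' ∂μ) ∂μ
      ≤ (∫ ω, F ((μ[Y | MeasurableSpace.comap X inferInstance]) ω) ∂μ)
        - F (∫ ω', Y ω' ∂μ) :=
  sharpness_le_statistical_information_general μ X Y g F hX hY hg hYoh hF
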